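/- arXiv:2403.05956 — 4 statements merged into one kernel-verified Lean document; each statement's English description precedes it below -/
import Mathlib

section
/- A density matrix ρ is passive with respect to a Hermitian H (i.e., Tr(ρH) ≤ Tr(UρU†H) for all unitaries U) if and only if ρ and H commute and the eigenvalues of ρ are anti-ordered with respect to those of H: on each eigenvector of H with lower energy, ρ has eigenvalue at least as large as on eigenvectors with higher energy. -/
/-!
In the eigenbasis of `H` (the unitary `W` with columns `w k`) the claim becomes one about
`σ = W† ρ W` and `H = diagonal ε`.

If `σ = diagonal c` with `c` anti-ordered, then `Tr(U σ U† H) = ∑ₐ εₐ ∑ᵦ |Uₐᵦ|² cᵦ`. The matrix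
`|Uₐᵦ|²` is doubly stochastic, hence (Birkhoff) a convex combination of permutation matrices, and
for each permutation the rearrangement inequality bounds the sum below by `∑ₐ εₐ cₐ`.

Conversely, testing passivity against the reflection `2P - 1` in the line spanned by a vector `v`
gives `‖v‖² Re⟨v, σHv⟩ ≤ ⟨v, σv⟩⟨v, Hv⟩`. For `v = e_j + β e_k` this says
`(ε_k - ε_j) (|β|² (σ_jj - σ_kk) + (|β|² - 1) Re(β σ_jk)) ≥ 0`; when `ε_j < ε_k`, taking `β = 1`
gives `σ_kk ≤ σ_jj`, and taking `β` a small positive multiple of `conj σ_jk` gives `σ_jk = 0`.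
-/

open Matrix Complex ComplexOrder

variable {n : Type*} [Fintype n]

theorem Matrix.trace_vecMulVec_star_mul (v : n → ℂ) (A : Matrix n n ℂ) :
    (vecMulVec v (star v) * A).trace = star v ⬝ᵥ A *ᵥ v := by
  rw [vecMulVec_mul, trace_vecMulVec, dotProduct_comm, dotProduct_mulVec]

theorem Matrix.trace_vecMulVec_star_mul_vecMulVec_star_mul (v : n → ℂ) (A B : Matrix n n ℂ) :
    (vecMulVec v (star v) * A * vecMulVec v (star v) * B).trace =
      (star v ⬝ᵥ A *ᵥ v) * (star v ⬝ᵥ B *ᵥ v) := by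
  rw [vecMulVec_mul, vecMulVec_mul_vecMulVec, vecMulVec_mul, trace_vecMulVec, smul_vecMul,
    dotProduct_smul, smul_eq_mul, dotProduct_mulVec, dotProduct_mulVec, dotProduct_comm v]

variable [DecidableEq n]

theorem Matrix.isStarProjection_inv_smul_vecMulVec {v : n → ℂ} (hv : v ≠ 0) :
    IsStarProjection ((star v ⬝ᵥ v)⁻¹ • vecMulVec v (star v)) := by
  have hN : star v ⬝ᵥ v ≠ 0 := dotProduct_star_self_eq_zero.not.mpr hv
  have hNreal : star (star v ⬝ᵥ v) = star v ⬝ᵥ v := by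
    rw [← star_dotProduct_star, star_star]
  constructor
  · rw [IsIdempotentElem, smul_mul_smul_comm, vecMulVec_mul_vecMulVec, vecMulVec_smul,
      smul_smul, mul_assoc, inv_mul_cancel₀ hN, mul_one]
  · rw [IsSelfAdjoint, star_smul, star_inv₀, hNreal, star_eq_conjTranspose,
      conjTranspose_vecMulVec, star_star]

theorem Matrix.star_single_add_smul_single_dotProduct_mulVec (A : Matrix n n ℂ) (j k : n)
    (β : ℂ) :
    star (Pi.single j 1 + β • Pi.single k 1) ⬝ᵥ A *ᵥ (Pi.single j 1 + β • Pi.single k 1) =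
      A j j + β * A j k + star β * A k j + star β * β * A k k := by
  simp only [star_add, star_smul, ← Pi.single_star, star_one, mulVec_add, mulVec_smul,
    mulVec_single_one, dotProduct_add, add_dotProduct, smul_dotProduct, dotProduct_smul,
    single_dotProduct, one_mul, col_apply, smul_eq_mul]
  ring

theorem Matrix.trace_mul_mul_star {W : Matrix n n ℂ} (hW : W ∈ unitaryGroup n ℂ)
    (A : Matrix n n ℂ) : (W * A * star W).trace = A.trace := by
  rw [trace_mul_cycle, Unitary.star_mul_self_of_mem hW, Matrix.one_mul]

theorem Matrix.mul_mul_star_mul_mul_mul_star {W : Matrix n n ℂ} (hW : W ∈ unitaryGroup n ℂ)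
    (A B : Matrix n n ℂ) : W * A * star W * (W * B * star W) = W * (A * B) * star W := by
  simp only [Matrix.mul_assoc]
  rw [← Matrix.mul_assoc (star W), Unitary.star_mul_self_of_mem hW, Matrix.one_mul]

theorem Matrix.mul_star_mul_mul_mul_star {W : Matrix n n ℂ} (hW : W ∈ unitaryGroup n ℂ)
    (A : Matrix n n ℂ) : W * (star W * A * W) * star W = A := by
  simp only [Matrix.mul_assoc, Unitary.mul_star_self_of_mem hW, Matrix.mul_one]
  rw [← Matrix.mul_assoc, Unitary.mul_star_self_of_mem hW, Matrix.one_mul]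

theorem Matrix.star_mul_mul_eq_iff {W : Matrix n n ℂ} (hW : W ∈ unitaryGroup n ℂ)
    (A B : Matrix n n ℂ) : star W * A * W = B ↔ A * W = W * B := by
  constructor
  · rintro rfl
    rw [← Matrix.mul_assoc, ← Matrix.mul_assoc, Unitary.mul_star_self_of_mem hW, Matrix.one_mul]
  · intro h
    rw [Matrix.mul_assoc, h, ← Matrix.mul_assoc, Unitary.star_mul_self_of_mem hW, Matrix.one_mul]

theorem Matrix.star_mul_self_eq_one_of_orthonormal {w : n → n → ℂ}
    (hw : ∀ i j, star (w i) ⬝ᵥ w j = if i = j then 1 else 0) :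
    star (of w)ᵀ * (of w)ᵀ = 1 := by
  ext i j
  simpa [mul_apply, one_apply, dotProduct] using hw i j

theorem Matrix.sum_smul_vecMulVec_eq_mul_diagonal_mul_star (w : n → n → ℂ) (ε : n → ℝ) :
    ∑ k, (ε k : ℂ) • vecMulVec (w k) (star (w k)) =
      (of w)ᵀ * diagonal (fun k => (ε k : ℂ)) * star (of w)ᵀ := by
  ext i j
  simp only [sum_apply, smul_apply, vecMulVec_apply, mul_apply (N := star _), mul_diagonal,
    transpose_apply, of_apply, star_apply, Pi.star_apply, smul_eq_mul]
  exact Finset.sum_congr rfl fun k _ => by ring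

theorem Matrix.forall_mulVec_eq_smul_iff (ρ : Matrix n n ℂ) (w : n → n → ℂ) (c : n → ℝ) :
    (∀ k, ρ *ᵥ w k = (c k : ℂ) • w k) ↔
      ρ * (of w)ᵀ = (of w)ᵀ * diagonal (fun k => (c k : ℂ)) := by
  simp only [← Matrix.ext_iff, funext_iff, mul_diagonal, transpose_apply, of_apply, Pi.smul_apply,
    smul_eq_mul, mul_comm _ (c _ : ℂ)]
  exact forall_comm

theorem Matrix.of_normSq_mem_doublyStochastic {U : Matrix n n ℂ} (hU : U ∈ unitaryGroup n ℂ) :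
    of (fun i j => normSq (U i j)) ∈ doublyStochastic ℝ n := by
  have hrow := congrFun₂ (mem_unitaryGroup_iff.mp hU)
  have hcol := congrFun₂ (mem_unitaryGroup_iff'.mp hU)
  refine mem_doublyStochastic_iff_sum.mpr ⟨fun i j => normSq_nonneg _, fun i => ?_, fun j => ?_⟩
  · simpa [mul_apply, mul_conj, ← ofReal_inj] using hrow i i
  · simpa [mul_apply, conj_mul', normSq_eq_norm_sq, ← ofReal_inj] using hcol j j

theorem Matrix.dotProduct_le_dotProduct_mulVec_of_mem_doublyStochastic {M : Matrix n n ℝ}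
    (hM : M ∈ doublyStochastic ℝ n) {f g : n → ℝ} (hfg : Antivary f g) :
    f ⬝ᵥ g ≤ f ⬝ᵥ (M *ᵥ g) := by
  have hconv : Convex ℝ {M : Matrix n n ℝ | f ⬝ᵥ g ≤ f ⬝ᵥ (M *ᵥ g)} :=
    convex_halfSpace_ge ⟨fun M N => by simp [add_mulVec, dotProduct_add],
      fun r M => by simp [smul_mulVec, dotProduct_smul]⟩ _
  have hM' : M ∈ convexHull ℝ {σ.permMatrix ℝ | σ : Equiv.Perm n} := by
    rwa [← doublyStochastic_eq_convexHull_permMatrix]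
  refine convexHull_min ?_ hconv hM'
  rintro _ ⟨σ, rfl⟩
  simpa [permMatrix_mulVec, dotProduct] using hfg.sum_mul_le_sum_mul_comp_perm (σ := σ)

theorem Matrix.re_trace_mul_diagonal_mul_star_mul_diagonal (U : Matrix n n ℂ) (c ε : n → ℝ) :
    (U * diagonal (fun i => (c i : ℂ)) * star U * diagonal (fun i => (ε i : ℂ))).trace.re =
      ε ⬝ᵥ (of (fun i j => normSq (U i j)) *ᵥ c) := by
  rw [← ofReal_re (ε ⬝ᵥ _)]
  congr 1
  simp only [trace, diag, mul_diagonal, mul_apply (N := star U), star_apply, dotProduct, mulVec,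
    of_apply, Finset.mul_sum, Finset.sum_mul]
  push_cast
  refine Finset.sum_congr rfl fun i _ => Finset.sum_congr rfl fun j _ => ?_
  rw [← mul_conj]
  simp only [RCLike.star_def]
  ring

def IsPassive (ρ H : Matrix n n ℂ) : Prop :=
  ∀ U ∈ unitaryGroup n ℂ, (ρ * H).trace.re ≤ (U * ρ * star U * H).trace.re

theorem IsPassive.conj {ρ H W : Matrix n n ℂ} (hW : W ∈ unitaryGroup n ℂ) (h : IsPassive ρ H) :
    IsPassive (W * ρ * star W) (W * H * star W) := by
  intro U hU
  have hV : star W * U * W ∈ unitaryGroup n ℂ := mul_mem (mul_mem (Unitary.star_mem hW) hU) hW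
  have hconj : U * (W * ρ * star W) * star U * (W * H * star W) =
      W * (star W * U * W * ρ * star (star W * U * W) * H) * star W := by
    simp only [star_mul, star_star, Matrix.mul_assoc]
    rw [← Matrix.mul_assoc W (star W), Unitary.mul_star_self_of_mem hW, Matrix.one_mul]
  rw [mul_mul_star_mul_mul_mul_star hW, hconj, trace_mul_mul_star hW, trace_mul_mul_star hW]
  exact h _ hV

theorem isPassive_conj_iff {ρ H W : Matrix n n ℂ} (hW : W ∈ unitaryGroup n ℂ) :
    IsPassive (W * ρ * star W) (W * H * star W) ↔ IsPassive ρ H := by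
  refine ⟨fun h => ?_, fun h => h.conj hW⟩
  have hcancel := mul_star_mul_mul_mul_star (Unitary.star_mem hW)
  simp only [star_star] at hcancel
  simpa only [star_star, hcancel] using h.conj (Unitary.star_mem hW)

theorem isPassive_diagonal {c ε : n → ℝ} (h : Antivary ε c) :
    IsPassive (diagonal fun i => (c i : ℂ)) (diagonal fun i => (ε i : ℂ)) := by
  intro U hU
  have hdiag :
      (diagonal (fun i => (c i : ℂ)) * diagonal fun i => (ε i : ℂ)).trace.re = ε ⬝ᵥ c := by
    simp [trace, dotProduct, mul_comm]
  rw [hdiag, re_trace_mul_diagonal_mul_star_mul_diagonal]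
  exact dotProduct_le_dotProduct_mulVec_of_mem_doublyStochastic
    (of_normSq_mem_doublyStochastic hU) h

theorem IsPassive.re_trace_mul_le {σ H P : Matrix n n ℂ} (h : IsPassive σ H)
    (hσ : σ.IsHermitian) (hH : H.IsHermitian) (hP : IsStarProjection P) :
    (P * σ * H).trace.re ≤ (P * σ * P * H).trace.re := by
  have hPh : Pᴴ = P := hP.isSelfAdjoint
  have hsym : (σ * P * H).trace.re = (P * σ * H).trace.re := by
    rw [← conj_re, ← RCLike.star_def, ← trace_conjTranspose]
    simp only [conjTranspose_mul, hσ.eq, hH.eq, hPh]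
    rw [trace_mul_cycle, Matrix.mul_assoc]
  have hpass := h _ hP.two_mul_sub_one_mem_unitary
  have hrefl : star (2 * P - 1) = 2 * P - 1 := by
    simp [two_mul, hP.isSelfAdjoint.star_eq]
  have hexp : (2 * P - 1) * σ * (2 * P - 1) * H
      = (4 : ℤ) • (P * σ * P * H) - (2 : ℤ) • (P * σ * H) - (2 : ℤ) • (σ * P * H) + σ * H := by
    noncomm_ring
  rw [hrefl, hexp] at hpass
  simp only [trace_add, trace_sub, trace_smul, add_re, sub_re, re_zsmul, hsym] at hpass
  simp only [zsmul_eq_mul, Int.cast_ofNat] at hpass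
  linarith

theorem IsPassive.re_dotProduct_mul_le {σ H : Matrix n n ℂ} (h : IsPassive σ H)
    (hσ : σ.IsHermitian) (hH : H.IsHermitian) (v : n → ℂ) :
    (star v ⬝ᵥ v).re * (star v ⬝ᵥ (σ * H) *ᵥ v).re ≤
      ((star v ⬝ᵥ σ *ᵥ v) * (star v ⬝ᵥ H *ᵥ v)).re := by
  rcases eq_or_ne v 0 with rfl | hv
  · simp
  have hle := h.re_trace_mul_le hσ hH (isStarProjection_inv_smul_vecMulVec hv)
  simp only [Matrix.smul_mul, Matrix.mul_smul, smul_smul, trace_smul] at hle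
  rw [Matrix.mul_assoc, trace_vecMulVec_star_mul,
    trace_vecMulVec_star_mul_vecMulVec_star_mul] at hle
  have hN : ((star v ⬝ᵥ v).re : ℂ) = star v ⬝ᵥ v := by
    rw [← conj_eq_iff_re, ← RCLike.star_def, ← star_dotProduct_star, star_star]
  have hNpos : 0 < (star v ⬝ᵥ v).re := (pos_iff.mp (dotProduct_star_self_pos_iff.mpr hv)).1
  rw [← hN, smul_eq_mul, smul_eq_mul, ← ofReal_inv, ← ofReal_mul, re_ofReal_mul,
    re_ofReal_mul] at hle
  field_simp at hle
  exact hle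

theorem IsPassive.two_level_nonneg {σ : Matrix n n ℂ} {ε : n → ℝ}
    (h : IsPassive σ (diagonal fun i => (ε i : ℂ))) (hσ : σ.IsHermitian) {j k : n}
    (hjk : j ≠ k) (β : ℂ) :
    0 ≤ (ε k - ε j) *
      (normSq β * ((σ j j).re - (σ k k).re) + (normSq β - 1) * (β * σ j k).re) := by
  have hq := h.re_dotProduct_mul_le hσ (isHermitian_diagonal_of_self_adjoint _ (by ext; simp))
    (Pi.single j 1 + β • Pi.single k 1)
  have hnorm : star (Pi.single j 1 + β • Pi.single k 1) ⬝ᵥ (Pi.single j 1 + β • Pi.single k 1) =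
      1 + star β * β := by
    have := star_single_add_smul_single_dotProduct_mulVec (1 : Matrix n n ℂ) j k β
    rw [one_mulVec] at this
    rw [this, one_apply_eq, one_apply_eq, one_apply_ne hjk, one_apply_ne hjk.symm]
    ring
  rw [hnorm] at hq
  simp only [star_single_add_smul_single_dotProduct_mulVec, mul_diagonal, diagonal_apply_eq,
    diagonal_apply_ne _ hjk, diagonal_apply_ne _ hjk.symm] at hq
  have hkj : σ k j = star (σ j k) := (hσ.apply k j).symm
  have hjj : (σ j j).im = 0 := conj_eq_iff_im.mp (hσ.apply j j)
  have hkk : (σ k k).im = 0 := conj_eq_iff_im.mp (hσ.apply k k)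
  rw [hkj] at hq
  simp only [mul_re, mul_im, add_re, add_im, one_re, zero_re, zero_im, star_def, conj_re, conj_im,
    ofReal_re, ofReal_im, hjj, hkk, normSq_apply] at hq ⊢
  linear_combination hq

theorem IsPassive.re_apply_le_re_apply {σ : Matrix n n ℂ} {ε : n → ℝ}
    (h : IsPassive σ (diagonal fun i => (ε i : ℂ))) (hσ : σ.IsHermitian) {j k : n}
    (hjk : ε j < ε k) : (σ k k).re ≤ (σ j j).re := by
  have := h.two_level_nonneg hσ (ne_of_apply_ne ε hjk.ne) 1
  rw [map_one, sub_self, zero_mul, add_zero, one_mul] at this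
  nlinarith

theorem IsPassive.apply_eq_zero {σ : Matrix n n ℂ} {ε : n → ℝ}
    (h : IsPassive σ (diagonal fun i => (ε i : ℂ))) (hσ : σ.IsHermitian) {j k : n}
    (hjk : ε j < ε k) : σ j k = 0 := by
  set A := (σ j j).re - (σ k k).re
  set b := normSq (σ j k)
  have hA : 0 ≤ A := sub_nonneg.mpr (h.re_apply_le_re_apply hσ hjk)
  have hb : 0 ≤ b := normSq_nonneg _
  -- `t ≤ 1` and `t (A + b) < 1`, so `t A + t² b < 1`
  set t := (A + b + 1)⁻¹
  have ht : 0 < t := by positivity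
  have ht1 : t * (A + b + 1) = 1 := inv_mul_cancel₀ (by positivity)
  have := h.two_level_nonneg hσ (ne_of_apply_ne ε hjk.ne) (t * star (σ j k))
  rw [star_def, normSq_mul, normSq_ofReal, normSq_conj, mul_assoc (t : ℂ),
    ← normSq_eq_conj_mul_self, ← ofReal_mul, ofReal_re] at this
  have hneg : t * A + t * t * b - 1 < 0 := by nlinarith
  have hnonneg : 0 ≤ t * b * (t * A + t * t * b - 1) := by nlinarith
  by_contra hne
  have := mul_neg_of_pos_of_neg (mul_pos ht (normSq_pos.mpr hne)) hneg
  linarith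

theorem IsPassive.exists_eq_diagonal {σ : Matrix n n ℂ} {ε : n → ℝ} (hε : Function.Injective ε)
    (h : IsPassive σ (diagonal fun i => (ε i : ℂ))) (hσ : σ.IsHermitian) :
    ∃ c : n → ℝ, σ = diagonal (fun i => (c i : ℂ)) ∧ ∀ j k, ε j ≤ ε k → c k ≤ c j := by
  refine ⟨fun i => (σ i i).re, ?_, fun j k hjk => ?_⟩
  · ext i j
    rcases eq_or_ne i j with rfl | hij
    · simpa using (hσ.coe_re_apply_self i).symm
    rw [diagonal_apply_ne _ hij]
    rcases (hε.ne hij).lt_or_gt with hlt | hlt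
    · exact h.apply_eq_zero hσ hlt
    · rw [← hσ.apply i j, h.apply_eq_zero hσ hlt, star_zero]
  · rcases hjk.eq_or_lt with heq | hlt
    · rw [hε heq]
    · exact h.re_apply_le_re_apply hσ hlt

theorem passive_iff_commute_antiordered_general {d : ℕ}
    (w : Fin d → (Fin d → ℂ))
    (hw : ∀ i j, star (w i) ⬝ᵥ w j = if i = j then 1 else 0)
    (ε : Fin d → ℝ) (hε : StrictMono ε)
    (H : Matrix (Fin d) (Fin d) ℂ)
    (hH : H = ∑ k, ((ε k : ℂ)) • vecMulVec (w k) (star (w k)))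
    (ρ : Matrix (Fin d) (Fin d) ℂ) (hρ : ρ.PosSemidef) :
    (∀ U ∈ Matrix.unitaryGroup (Fin d) ℂ,
        ((ρ * H).trace).re ≤ ((U * ρ * star U * H).trace).re)
    ↔ (ρ * H = H * ρ ∧ ∃ c : Fin d → ℝ,
        (∀ k, ρ.mulVec (w k) = (c k : ℂ) • w k) ∧
        (∀ j k, ε j ≤ ε k → c k ≤ c j)) := by
  set W : Matrix (Fin d) (Fin d) ℂ := (of w)ᵀ
  have hW : W ∈ unitaryGroup (Fin d) ℂ :=
    mem_unitaryGroup_iff'.mpr (star_mul_self_eq_one_of_orthonormal hw)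
  set σ := star W * ρ * W
  have hρσ : ρ = W * σ * star W := (mul_star_mul_mul_mul_star hW ρ).symm
  have hHD : H = W * diagonal (fun k => (ε k : ℂ)) * star W :=
    hH.trans (sum_smul_vecMulVec_eq_mul_diagonal_mul_star w ε)
  have hσ : σ.IsHermitian := isHermitian_conjTranspose_mul_mul W hρ.isHermitian
  have heig (c : Fin d → ℝ) :
      (∀ k, ρ *ᵥ w k = (c k : ℂ) • w k) ↔ σ = diagonal (fun k => (c k : ℂ)) :=
    (forall_mulVec_eq_smul_iff ρ w c).trans (star_mul_mul_eq_iff hW _ _).symm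
  have hpass : IsPassive ρ H ↔ IsPassive σ (diagonal fun k => (ε k : ℂ)) := by
    conv_lhs => rw [hρσ, hHD]
    exact isPassive_conj_iff hW
  refine hpass.trans ⟨fun h => ?_, fun ⟨_, c, hc, hanti⟩ => ?_⟩
  · obtain ⟨c, hc, hanti⟩ := h.exists_eq_diagonal hε.injective hσ
    refine ⟨?_, c, (heig c).mpr hc, hanti⟩
    rw [hρσ, hHD, hc, mul_mul_star_mul_mul_mul_star hW, mul_mul_star_mul_mul_mul_star hW,
      (commute_diagonal _ _).eq]
  · rw [(heig c).mp hc]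
    exact isPassive_diagonal fun i j hc => not_lt.mp fun hlt => hc.not_ge (hanti i j hlt.le)

/-- A density matrix `ρ` is passive with respect to a Hermitian `H`
with non-degenerate spectrum (eigenvalues `ε` strictly increasing, eigenvectors `w k`)
iff `ρ` commutes with `H` and the eigenvalues of `ρ` on the eigenvectors of `H`
are anti-ordered: lower energy eigenvectors carry eigenvalues of `ρ` at least as large. -/
theorem passive_iff_commute_antiordered {d : ℕ}
    (w : Fin d → (Fin d → ℂ))
    (hw : ∀ i j, star (w i) ⬝ᵥ w j = if i = j then 1 else 0)
    (ε : Fin d → ℝ) (hε : StrictMono ε)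
    (H : Matrix (Fin d) (Fin d) ℂ)
    (hH : H = ∑ k, ((ε k : ℂ)) • vecMulVec (w k) (star (w k)))
    (ρ : Matrix (Fin d) (Fin d) ℂ) (hρ : ρ.PosSemidef) (htr : ρ.trace = 1) :
    (∀ U ∈ Matrix.unitaryGroup (Fin d) ℂ,
        ((ρ * H).trace).re ≤ ((U * ρ * star U * H).trace).re)
    ↔ (ρ * H = H * ρ ∧ ∃ c : Fin d → ℝ,
        (∀ k, ρ.mulVec (w k) = (c k : ℂ) • w k) ∧
        (∀ j k, ε j ≤ ε k → c k ≤ c j)) :=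
  passive_iff_commute_antiordered_general w hw ε hε H hH ρ hρ
end

section
/- Let U(t) = exp(−i(ω/2) t n̂·σ) with n̂ = (sin φ₀, −cos φ₀, 0) and let ρ be the qubit state with Bloch vector (r sin θ₀ cos φ₀, r sin θ₀ sin φ₀, r cos θ₀). Then with H = |1⟩⟨1|, the extracted work W(t) = Tr(Hρ) − Tr(H U(t)ρU(t)†) equals r sin(ωt/2) sin(θ₀ − ωt/2). -/
/-!
Since `n̂ · σ` squares to the identity, `U(t) = cos(ωt/2) - i sin(ωt/2) n̂ · σ`, and conjugation
by `U(t)` rotates the Bloch vector by the angle `ωt` about the equatorial axis `n̂`, which is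
orthogonal to the meridian plane of the Bloch vector. So the polar angle drops from `θ₀` to
`θ₀ - ωt`, and as `Tr(Hρ) = (1 - v_z)/2` the work is
`r (cos(θ₀ - ωt) - cos θ₀)/2 = r sin(ωt/2) sin(θ₀ - ωt/2)`.
-/

open Matrix Complex Real

section Involution

variable {𝔸 : Type*} [NormedRing 𝔸] [NormedAlgebra ℂ 𝔸] [CompleteSpace 𝔸]

theorem exp_smul_of_mul_self_eq_one {A : 𝔸} (hA : A * A = 1) (z : ℂ) :
    NormedSpace.exp (z • A) = Complex.cosh z • (1 : 𝔸) + Complex.sinh z • A := by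
  have hpow (n : ℕ) : A ^ (2 * n) = 1 := by rw [pow_mul, sq, hA, one_pow]
  refine (NormedSpace.exp_series_hasSum_exp' (𝕂 := ℂ) (z • A)).unique
    (HasSum.even_add_odd ?_ ?_)
  · convert (Complex.hasSum_cosh z).smul_const (1 : 𝔸) using 2 with n
    rw [smul_pow, hpow, smul_smul, div_eq_inv_mul]
  · convert (Complex.hasSum_sinh z).smul_const A using 2 with n
    rw [smul_pow, pow_succ A, hpow, one_mul, smul_smul, div_eq_inv_mul]

theorem exp_neg_I_mul_smul_of_mul_self_eq_one {A : 𝔸} (hA : A * A = 1) (c : ℝ) :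
    NormedSpace.exp ((-I * c) • A) = (Real.cos c : ℂ) • (1 : 𝔸) - (I * Real.sin c) • A := by
  rw [exp_smul_of_mul_self_eq_one hA, neg_mul, mul_comm I, Complex.cosh_neg, Complex.sinh_neg,
    cosh_mul_I, sinh_mul_I, ofReal_cos, ofReal_sin, neg_smul, ← sub_eq_add_neg, mul_comm]

end Involution

def pauliX : Matrix (Fin 2) (Fin 2) ℂ := !![0, 1; 1, 0]

def pauliY : Matrix (Fin 2) (Fin 2) ℂ := !![0, -I; I, 0]

def pauliZ : Matrix (Fin 2) (Fin 2) ℂ := !![1, 0; 0, -1]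

theorem equatorial_pauli_mul_self (a b : ℂ) :
    (a • pauliX + b • pauliY) * (a • pauliX + b • pauliY) = (a ^ 2 + b ^ 2) • 1 := by
  ext i j
  fin_cases i <;> fin_cases j <;>
    simp [pauliX, pauliY, Matrix.mul_apply, Fin.sum_univ_two] <;>
    linear_combination -b ^ 2 * I_sq

noncomputable def blochState (x y z : ℝ) : Matrix (Fin 2) (Fin 2) ℂ :=
  ((1/2 : ℝ) : ℂ) • (1 + (x : ℂ) • pauliX + (y : ℂ) • pauliY + (z : ℂ) • pauliZ)

theorem blochState_one_one (x y z : ℝ) : blochState x y z 1 1 = ((1 - z) / 2 : ℝ) := by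
  simp [blochState, pauliX, pauliY, pauliZ]
  ring

theorem trace_proj_one_mul {R : Type*} [Semiring R] (X : Matrix (Fin 2) (Fin 2) R) :
    (!![0, 0; 0, 1] * X).trace = X 1 1 := by
  simp [Matrix.trace, Matrix.vecMul, dotProduct, Fin.sum_univ_two]

noncomputable def equatorialRotation (a b c : ℝ) : Matrix (Fin 2) (Fin 2) ℂ :=
  (Real.cos c : ℂ) • 1 - (I * Real.sin c) • ((a : ℂ) • pauliX + (b : ℂ) • pauliY)

theorem exp_eq_equatorialRotation {a b : ℝ} (hab : a ^ 2 + b ^ 2 = 1) (c : ℝ) :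
    NormedSpace.exp ((-I * c) • ((a : ℂ) • pauliX + (b : ℂ) • pauliY)) =
      equatorialRotation a b c := by
  have hA : ((a : ℂ) • pauliX + (b : ℂ) • pauliY) * ((a : ℂ) • pauliX + (b : ℂ) • pauliY) = 1 := by
    rw [equatorial_pauli_mul_self, ← ofReal_pow, ← ofReal_pow, ← ofReal_add, hab, ofReal_one,
      one_smul]
  exact open scoped Norms.Operator in exp_neg_I_mul_smul_of_mul_self_eq_one hA c

/-- The right-hand side is `(1 - v'_z)/2`, where `v'` is the Bloch vector `(x, y, z)` rotated by
the angle `2c` about the axis `(a, b, 0)`. -/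
theorem equatorialRotation_conj_blochState_one_one {a b : ℝ} (hab : a ^ 2 + b ^ 2 = 1)
    (c x y z : ℝ) :
    (equatorialRotation a b c * blochState x y z * star (equatorialRotation a b c)) 1 1
      = ((1 - (Real.cos (2 * c) * z + Real.sin (2 * c) * (a * y - b * x))) / 2 : ℝ) := by
  have hc := Real.sin_sq_add_cos_sq c
  rw [Real.cos_two_mul, Real.sin_two_mul]
  simp only [equatorialRotation]
  generalize Real.sin c = s, Real.cos c = k at *
  simp [blochState, pauliX, pauliY, pauliZ, Matrix.mul_apply, Fin.sum_univ_two, Complex.ext_iff,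
    sq]
  constructor
  · linear_combination (s ^ 2 * (1 + z) / 2) * hab + (1 + z) / 2 * hc
  · ring

theorem geodesic_work_formula_general (r θ₀ φ₀ ω t : ℝ)
    (sx sy sz ρ H : Matrix (Fin 2) (Fin 2) ℂ)
    (hsx : sx = !![0, 1; 1, 0]) (hsy : sy = !![0, -Complex.I; Complex.I, 0])
    (hsz : sz = !![1, 0; 0, -1])
    (hρ : ρ = ((1/2 : ℝ) : ℂ) • ((1 : Matrix (Fin 2) (Fin 2) ℂ)
        + ((r * Real.sin θ₀ * Real.cos φ₀ : ℝ) : ℂ) • sx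
        + ((r * Real.sin θ₀ * Real.sin φ₀ : ℝ) : ℂ) • sy
        + ((r * Real.cos θ₀ : ℝ) : ℂ) • sz))
    (hH : H = !![0, 0; 0, 1])
    (U : Matrix (Fin 2) (Fin 2) ℂ)
    (hU : U = NormedSpace.exp ((-(Complex.I) * ((ω/2 * t : ℝ) : ℂ)) •
        (((Real.sin φ₀ : ℝ) : ℂ) • sx - ((Real.cos φ₀ : ℝ) : ℂ) • sy))) :
    (H * ρ).trace - (H * (U * ρ * star U)).trace
      = ((r * Real.sin (ω * t / 2) * Real.sin (θ₀ - ω * t / 2) : ℝ) : ℂ) := by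
  obtain rfl : sx = pauliX := hsx
  obtain rfl : sy = pauliY := hsy
  obtain rfl : sz = pauliZ := hsz
  obtain rfl : ρ = blochState (r * Real.sin θ₀ * Real.cos φ₀) (r * Real.sin θ₀ * Real.sin φ₀)
      (r * Real.cos θ₀) := hρ
  have hφ := Real.sin_sq_add_cos_sq φ₀
  have hunit : Real.sin φ₀ ^ 2 + (-Real.cos φ₀) ^ 2 = 1 := by rwa [neg_sq]
  have hUrot : U = equatorialRotation (Real.sin φ₀) (-Real.cos φ₀) (ω * t / 2) := by
    rw [hU, ← exp_eq_equatorialRotation hunit, ofReal_neg, neg_smul, ← sub_eq_add_neg,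
      div_mul_eq_mul_div]
  have hcross : Real.sin φ₀ * (r * Real.sin θ₀ * Real.sin φ₀)
      - -Real.cos φ₀ * (r * Real.sin θ₀ * Real.cos φ₀) = r * Real.sin θ₀ := by
    linear_combination r * Real.sin θ₀ * hφ
  rw [hH, hUrot, trace_proj_one_mul, trace_proj_one_mul, blochState_one_one,
    equatorialRotation_conj_blochState_one_one hunit, hcross, ← ofReal_sub]
  congr 1
  rw [Real.cos_two_mul, Real.sin_two_mul, Real.sin_sub]
  linear_combination r * Real.cos θ₀ * Real.sin_sq_add_cos_sq (ω * t / 2)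

/-- For the geodesic drive `U(t) = exp(−i(ω/2)t n̂·σ)` with
`n̂ = (sin φ₀, −cos φ₀, 0)` applied to the qubit state with Bloch vector
`(r sin θ₀ cos φ₀, r sin θ₀ sin φ₀, r cos θ₀)` and `H = |1⟩⟨1|`, the extracted
work is `W(t) = Tr(Hρ) − Tr(H U(t)ρU(t)†) = r sin(ωt/2) sin(θ₀ − ωt/2)`. -/
theorem geodesic_work_formula (r θ₀ φ₀ ω t : ℝ) (hω : 0 < ω)
    (sx sy sz ρ H : Matrix (Fin 2) (Fin 2) ℂ)
    (hsx : sx = !![0, 1; 1, 0]) (hsy : sy = !![0, -Complex.I; Complex.I, 0])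
    (hsz : sz = !![1, 0; 0, -1])
    (hρ : ρ = ((1/2 : ℝ) : ℂ) • ((1 : Matrix (Fin 2) (Fin 2) ℂ)
        + ((r * Real.sin θ₀ * Real.cos φ₀ : ℝ) : ℂ) • sx
        + ((r * Real.sin θ₀ * Real.sin φ₀ : ℝ) : ℂ) • sy
        + ((r * Real.cos θ₀ : ℝ) : ℂ) • sz))
    (hH : H = !![0, 0; 0, 1])
    (U : Matrix (Fin 2) (Fin 2) ℂ)
    (hU : U = NormedSpace.exp ((-(Complex.I) * ((ω/2 * t : ℝ) : ℂ)) •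
        (((Real.sin φ₀ : ℝ) : ℂ) • sx - ((Real.cos φ₀ : ℝ) : ℂ) • sy))) :
    (H * ρ).trace - (H * (U * ρ * star U)).trace
      = ((r * Real.sin (ω * t / 2) * Real.sin (θ₀ - ω * t / 2) : ℝ) : ℂ) :=
  geodesic_work_formula_general r θ₀ φ₀ ω t sx sy sz ρ H hsx hsy hsz hρ hH U hU
end

section
/- Let g : [0, s₀] → [0,1] be continuous with g(s) < 1 for s < s₀, g(s₀) = 1, and 1 − g(s) ≤ C(s₀ − s) near s₀ for some C > 0. Then the ODE ds/dt = 1 − exp(−ζ(1 − g(s))) with s(0) = 0 and ζ > 0 has a solution satisfying s(t) < s₀ for all t ≥ 0 and s(t) → s₀ as t → ∞. -/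
/-!
Separating variables, the solution is the inverse of the travel time `T(x) = ∫₀ˣ du / v(u)`,
where `v(u) = 1 − exp(−ζ(1 − g(u)))` is positive below `s₀`. Since `1 − e^{−y} ≤ y`, near `s₀`
the velocity is at most `ζC(s₀ − u)`, so `T(x) ≥ const − log(s₀ − x)/(ζC) → ∞` as `x → s₀`:
`T` maps `[0, s₀)` onto `[0, ∞)`, and its inverse stays below `s₀` and tends to `s₀`.
-/

open Real Filter Set Topology intervalIntegral

theorem sub_le_sub_of_hasDerivAt_le {φ ψ φ' ψ' : ℝ → ℝ} {x y : ℝ} (hxy : x ≤ y)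
    (hφ : ∀ u ∈ Icc x y, HasDerivAt φ (φ' u) u) (hψ : ∀ u ∈ Icc x y, HasDerivAt ψ (ψ' u) u)
    (hle : ∀ u ∈ Icc x y, φ' u ≤ ψ' u) : φ y - φ x ≤ ψ y - ψ x := by
  have hmono : MonotoneOn (fun u => ψ u - φ u) (Icc x y) := by
    refine monotoneOn_of_hasDerivWithinAt_nonneg (f' := fun u => ψ' u - φ' u) (convex_Icc x y)
      ?_ ?_ ?_
    · exact fun u hu => ((hψ u hu).sub (hφ u hu)).continuousAt.continuousWithinAt
    · exact fun u hu =>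
        ((hψ u (interior_subset hu)).sub (hφ u (interior_subset hu))).hasDerivWithinAt
    · exact fun u hu => sub_nonneg.mpr (hle u (interior_subset hu))
  have := hmono (left_mem_Icc.mpr hxy) (right_mem_Icc.mpr hxy) hxy
  linarith

noncomputable def travelTime (f : ℝ → ℝ) (x : ℝ) : ℝ := ∫ u in (0 : ℝ)..x, (f u)⁻¹

section SeparationOfVariables

variable {f : ℝ → ℝ} {b : ℝ} (hb : 0 < b) (hf : ContinuousOn f (Iio b)) (hpos : ∀ u < b, 0 < f u)
include hb hf hpos

theorem hasDerivAt_travelTime {x : ℝ} (hx : x < b) : HasDerivAt (travelTime f) (f x)⁻¹ x := by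
  have hinv : ContinuousOn (fun u => (f u)⁻¹) (Iio b) := hf.inv₀ fun u hu => (hpos u hu).ne'
  refine integral_hasDerivAt_right ?_ (hinv.stronglyMeasurableAtFilter isOpen_Iio x hx)
    (hinv.continuousAt (isOpen_Iio.mem_nhds hx))
  exact (hinv.mono fun u hu => hu.2.trans_lt (max_lt hb hx)).intervalIntegrable

theorem strictMonoOn_travelTime : StrictMonoOn (travelTime f) (Iio b) := by
  refine strictMonoOn_of_hasDerivWithinAt_pos (f' := fun x => (f x)⁻¹) (convex_Iio b) ?_ ?_ ?_
  · exact fun x hx => (hasDerivAt_travelTime hb hf hpos hx).continuousAt.continuousWithinAt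
  · rw [interior_Iio]
    exact fun x hx => (hasDerivAt_travelTime hb hf hpos hx).hasDerivWithinAt
  · rw [interior_Iio]
    exact fun x hx => inv_pos.mpr (hpos x hx)

theorem tendsto_travelTime_atBot {M : ℝ} (hM : ∀ u ≤ 0, f u ≤ M) :
    Tendsto (travelTime f) atBot atBot := by
  have hMpos : 0 < M := (hpos 0 hb).trans_le (hM 0 le_rfl)
  refine tendsto_atBot_mono' _ ?_ (tendsto_id.atBot_div_const hMpos)
  filter_upwards [eventually_le_atBot 0] with x hx
  have := sub_le_sub_of_hasDerivAt_le hx (fun u _ => (hasDerivAt_id u).div_const M)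
    (fun u hu => hasDerivAt_travelTime hb hf hpos (hu.2.trans_lt hb))
    (fun u hu => (one_div M).trans_le (inv_anti₀ (hpos u (hu.2.trans_lt hb)) (hM u hu.2)))
  simp only [travelTime, integral_same, id, zero_div] at this ⊢
  linarith

theorem tendsto_travelTime_nhdsLT {a K : ℝ} (ha : a < b) (hK : ∀ u ∈ Ico a b, f u ≤ K * (b - u)) :
    Tendsto (travelTime f) (𝓝[<] b) atTop := by
  have hKpos : 0 < K := pos_of_mul_pos_left ((hpos a ha).trans_le (hK a ⟨le_rfl, ha⟩))
    (sub_pos.mpr ha).le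
  have hlog : Tendsto (fun x => log (b - x)) (𝓝[<] b) atBot := by
    refine tendsto_log_nhdsGT_zero.comp ?_
    have := ((continuous_const.sub continuous_id).tendsto' b 0 (sub_self b)).mono_left
      (nhdsWithin_le_nhds (s := Iio b))
    exact tendsto_nhdsWithin_iff.mpr
      ⟨this, eventually_nhdsWithin_of_forall fun x hx => mem_Ioi.mpr (sub_pos.mpr hx)⟩
  refine tendsto_atTop_mono' _ ?_
    (((tendsto_neg_atBot_atTop.comp hlog).atTop_div_const hKpos).atTop_add
      (tendsto_const_nhds (x := travelTime f a + log (b - a) / K)))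
  filter_upwards [Ico_mem_nhdsLT ha] with x hx
  have hcompare : ∀ u ∈ Icc a x, (K * (b - u))⁻¹ ≤ (f u)⁻¹ := fun u hu =>
    inv_anti₀ (hpos u (hu.2.trans_lt hx.2)) (hK u ⟨hu.1, hu.2.trans_lt hx.2⟩)
  have := sub_le_sub_of_hasDerivAt_le hx.1
    (fun u hu => (((hasDerivAt_id u).const_sub b).log
      (sub_ne_zero.mpr (hu.2.trans_lt hx.2).ne')).neg.div_const K)
    (fun u hu => hasDerivAt_travelTime hb hf hpos (hu.2.trans_lt hx.2))
    (fun u hu => by simpa [field] using hcompare u hu)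
  simp only [Pi.neg_apply, Function.comp, id, neg_div] at this ⊢
  linarith

theorem exists_hasDerivAt_of_tendsto_travelTime (hbot : Tendsto (travelTime f) atBot atBot)
    (htop : Tendsto (travelTime f) (𝓝[<] b) atTop) :
    ∃ s : ℝ → ℝ, s 0 = 0 ∧ Monotone s ∧ (∀ t, HasDerivAt s (f (s t)) t) ∧ (∀ t, s t < b) ∧
      Tendsto s atTop (𝓝 b) := by
  set T : Iio b → ℝ := (Iio b).domRestrict (travelTime f)
  have hTsurj : Function.Surjective T := by
    refine surjOn_iff_surjective.mp (ContinuousOn.surjOn_of_tendsto nonempty_Iio (fun x hx =>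
      (hasDerivAt_travelTime hb hf hpos hx).continuousAt.continuousWithinAt) ?_ ?_)
    · exact tendsto_comp_val_Iio_atBot.mpr hbot
    · exact (tendsto_comp_coe_Iio_atTop).mpr htop
  let e : Iio b ≃o ℝ :=
    StrictMono.orderIsoOfSurjective T (strictMonoOn_travelTime hb hf hpos).domRestrict hTsurj
  refine ⟨fun t => e.symm t, ?_, ?_, fun t => ?_, fun t => (e.symm t).2, ?_⟩
  · have h0 : T ⟨0, hb⟩ = 0 := integral_same
    change ((e.symm 0 : Iio b) : ℝ) = 0
    rw [e.symm_apply_eq.mpr h0.symm]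
  · exact Subtype.mono_coe _ |>.comp e.symm.monotone
  · have := HasDerivAt.of_local_left_inverse
      (continuous_subtype_val.comp e.symm.continuous).continuousAt
      (hasDerivAt_travelTime hb hf hpos (e.symm t).2) (inv_ne_zero (hpos _ (e.symm t).2).ne')
      (Eventually.of_forall fun t => e.apply_symm_apply t)
    rwa [inv_inv] at this
  · exact ((tendsto_Iio_atTop).mp (e.symm.tendsto_atTop)).mono_right nhdsWithin_le_nhds

end SeparationOfVariables

theorem slowdown_lemma_general (s₀ ζ C : ℝ) (hs₀ : 0 < s₀) (hζ : 0 < ζ)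
    (g : ℝ → ℝ) (hg : Continuous g)
    (hlt : ∀ x ∈ Set.Ico (0:ℝ) s₀, g x < 1)
    (hnear : ∃ δ > 0, ∀ x ∈ Set.Icc (s₀ - δ) s₀, 1 - g x ≤ C * (s₀ - x)) :
    ∃ s : ℝ → ℝ, s 0 = 0 ∧
      (∀ t : ℝ, 0 ≤ t → HasDerivAt s (1 - Real.exp (-ζ * (1 - g (s t)))) t) ∧
      (∀ t : ℝ, 0 ≤ t → s t < s₀) ∧
      Filter.Tendsto s Filter.atTop (nhds s₀) := by
  obtain ⟨δ, hδ, hnear⟩ := hnear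
  -- Freezing the velocity at its value at `0` for `u < 0` makes `s` differentiable at `t = 0`.
  set f : ℝ → ℝ := fun u => 1 - exp (-ζ * (1 - g (max u 0)))
  have hcont : ContinuousOn f (Iio s₀) := by fun_prop
  have hpos : ∀ u < s₀, 0 < f u := fun u hu => by
    have : g (max u 0) < 1 := hlt _ ⟨le_max_right _ _, max_lt hu hs₀⟩
    exact sub_pos.mpr (Real.exp_lt_one_iff.mpr (by nlinarith))
  have hle_one : ∀ u ≤ 0, f u ≤ 1 := fun u _ => sub_le_self _ (exp_pos _).le
  have hlinear : ∀ u ∈ Ico (max (s₀ - δ) 0) s₀, f u ≤ ζ * C * (s₀ - u) := fun u hu => by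
    have hu0 : max u 0 = u := max_eq_left ((le_max_right _ _).trans hu.1)
    calc f u ≤ ζ * (1 - g u) := by
          simp only [f, hu0, neg_mul]
          linarith [one_sub_le_exp_neg (ζ * (1 - g u))]
      _ ≤ ζ * (C * (s₀ - u)) :=
          mul_le_mul_of_nonneg_left (hnear u ⟨(le_max_left _ _).trans hu.1, hu.2.le⟩) hζ.le
      _ = ζ * C * (s₀ - u) := by ring
  obtain ⟨s, hs0, hmono, hderiv, hs_lt, hlim⟩ := exists_hasDerivAt_of_tendsto_travelTime hs₀ hcont
    hpos (tendsto_travelTime_atBot hs₀ hcont hpos hle_one)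
    (tendsto_travelTime_nhdsLT hs₀ hcont hpos (max_lt (by linarith) hs₀) hlinear)
  refine ⟨s, hs0, fun t ht => ?_, fun t _ => hs_lt t, hlim⟩
  have hst : max (s t) 0 = s t := max_eq_left (hs0 ▸ hmono ht)
  simpa [f, hst] using hderiv t

/-- abstract slowdown lemma: If `g : [0,s₀] → [0,1]` is continuous with
`g < 1` on `[0,s₀)`, `g(s₀) = 1`, and `1 − g(x) ≤ C(s₀ − x)` near `s₀`, then the ODE
`ds/dt = 1 − exp(−ζ(1 − g(s)))`, `s(0) = 0`, has a solution with `s(t) < s₀` for all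
`t ≥ 0` and `s(t) → s₀` as `t → ∞`. -/
theorem slowdown_lemma (s₀ ζ C : ℝ) (hs₀ : 0 < s₀) (hζ : 0 < ζ) (hC : 0 < C)
    (g : ℝ → ℝ) (hg : Continuous g)
    (hrange : ∀ x ∈ Set.Icc (0:ℝ) s₀, g x ∈ Set.Icc (0:ℝ) 1)
    (hlt : ∀ x ∈ Set.Ico (0:ℝ) s₀, g x < 1) (hend : g s₀ = 1)
    (hnear : ∃ δ > 0, ∀ x ∈ Set.Icc (s₀ - δ) s₀, 1 - g x ≤ C * (s₀ - x)) :
    ∃ s : ℝ → ℝ, s 0 = 0 ∧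
      (∀ t : ℝ, 0 ≤ t → HasDerivAt s (1 - Real.exp (-ζ * (1 - g (s t)))) t) ∧
      (∀ t : ℝ, 0 ≤ t → s t < s₀) ∧
      Filter.Tendsto s Filter.atTop (nhds s₀) :=
  slowdown_lemma_general s₀ ζ C hs₀ hζ g hg hlt hnear
end

section
/- For the qubit initial state |+⟩⟨+| driven along the geodesic (rotation about (0,−1,0) at angular speed ω_max = 2) under the attractor noise with pure attractor σ = |cos ψ |0⟩ + sin ψ |1⟩⟩⟨·| and ψ = π/8, the attractor lies on the noiseless trajectory, and the asymptotic extracted work equals 1/2 − sin²(π/8) = 1/(2√2) < 1/2 = ergotropy; hence the geodesic drive fails to extract the full ergotropy. -/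
open Matrix Complex Real

/-! Since `(I • σ_y)² = -1`, the propagator `exp (I t σ_y)` is the real rotation by `t`, which
maps `cos α |0⟩ + sin α |1⟩` to `cos (α - t) |0⟩ + sin (α - t) |1⟩`. Hence `|+⟩` (`α = π/4`)
reaches the attractor (`α = π/8`) at `t = π/8`. The energy of such a state is `sin² α`, and
`sin² (π/4) - sin² (π/8) = (cos (π/4) - cos (π/2)) / 2 = 1/(2√2) < 1/2`. -/

open scoped Nat in
theorem NormedSpace.exp_smul_of_mul_self_eq_neg_one {𝔸 : Type*} [Ring 𝔸] [Algebra ℝ 𝔸]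
    [TopologicalSpace 𝔸] [IsTopologicalRing 𝔸] [ContinuousSMul ℝ 𝔸] [T2Space 𝔸]
    {J : 𝔸} (hJ : J * J = -1) (t : ℝ) :
    NormedSpace.exp (t • J) = Real.cos t • (1 : 𝔸) + Real.sin t • J := by
  have hpow (n : ℕ) : J ^ (2 * n) = (-1 : ℝ) ^ n • (1 : 𝔸) := by
    rw [pow_mul, sq, hJ, ← neg_one_smul ℝ (1 : 𝔸), smul_pow, one_pow]
  rw [exp_eq_tsum ℝ]
  refine HasSum.tsum_eq (HasSum.even_add_odd ?_ ?_)
  · convert (Real.hasSum_cos t).smul_const (1 : 𝔸) using 2 with n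
    rw [smul_pow, hpow, smul_smul, smul_smul]
    ring_nf
  · convert (Real.hasSum_sin t).smul_const J using 2 with n
    rw [smul_pow, pow_succ J, hpow, smul_mul_assoc, one_mul, smul_smul, smul_smul]
    ring_nf

theorem Matrix.mul_vecMulVec_star_mul_star {n α : Type*} [Fintype n] [CommSemiring α]
    [StarRing α] (M : Matrix n n α) (u : n → α) :
    M * vecMulVec u (star u) * star M = vecMulVec (M *ᵥ u) (star (M *ᵥ u)) := by
  rw [mul_vecMulVec, vecMulVec_mul, star_mulVec, star_eq_conjTranspose]

noncomputable def realKet (α : ℝ) : Fin 2 → ℂ := ![(Real.cos α : ℂ), (Real.sin α : ℂ)]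

noncomputable def yRotation (t : ℝ) : Matrix (Fin 2) (Fin 2) ℂ :=
  !![(Real.cos t : ℂ), (Real.sin t : ℂ); -(Real.sin t : ℂ), (Real.cos t : ℂ)]

theorem exp_I_mul_smul_pauliY (t : ℝ) :
    NormedSpace.exp ((I * (t : ℂ)) • !![0, -I; I, 0]) = yRotation t := by
  set J : Matrix (Fin 2) (Fin 2) ℂ := !![0, 1; -1, 0]
  have hJ : J * J = -1 := by
    ext i j; fin_cases i <;> fin_cases j <;> simp [J]
  have hscal : (I * (t : ℂ)) • !![0, -I; I, 0] = t • J := by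
    ext i j; fin_cases i <;> fin_cases j <;> simp [J, ← mul_assoc, mul_comm]
  rw [hscal, NormedSpace.exp_smul_of_mul_self_eq_neg_one hJ]
  ext i j; fin_cases i <;> fin_cases j <;> simp [J, yRotation]

theorem yRotation_mulVec_realKet (t α : ℝ) : yRotation t *ᵥ realKet α = realKet (α - t) := by
  ext i; fin_cases i
  · simp [yRotation, realKet, Real.cos_sub]
  · simp [yRotation, realKet, Real.sin_sub]
    ring

theorem vecMulVec_realKet_pi_div_four :
    vecMulVec (realKet (π / 4)) (star (realKet (π / 4))) = !![1/2, 1/2; 1/2, 1/2] := by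
  have h : (√2 : ℂ) / 2 * ((√2 : ℂ) / 2) = 2⁻¹ := by
    rw [div_mul_div_comm, ← ofReal_mul, Real.mul_self_sqrt zero_le_two]; norm_num
  ext i j; fin_cases i <;> fin_cases j <;> simp [realKet, h]

theorem trace_vecMulVec_realKet_mul_excited (α : ℝ) :
    (vecMulVec (realKet α) (star (realKet α)) * !![0, 0; 0, 1]).trace =
      ((Real.sin α ^ 2 : ℝ) : ℂ) := by
  simp [-cons_vecMulVec, realKet, trace_fin_two, mul_apply, vecMulVec_apply, sq,
    ← Complex.sin_conj]

theorem sin_sq_pi_div_four_sub_sin_sq_pi_div_eight :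
    Real.sin (π / 4) ^ 2 - Real.sin (π / 8) ^ 2 = 1 / (2 * √2) := by
  rw [Real.sin_sq, Real.sin_sq, Real.cos_sq, Real.cos_sq, show 2 * (π / 4) = π / 2 by ring,
    show 2 * (π / 8) = π / 4 by ring, Real.cos_pi_div_two, Real.cos_pi_div_four]
  field_simp
  ring_nf
  norm_num

/-- For the initial state `|+⟩⟨+|` driven along the geodesic
(rotation about `(0,−1,0)` at `ω_max = 2`, i.e. `U(t) = exp(itσ_y)`), the attractor
`σ = |cos(π/8)|0⟩ + sin(π/8)|1⟩⟩⟨·|` lies on the noiseless trajectory, and the work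
extracted when the dynamics stalls at `σ` equals `1/2 − sin²(π/8) = 1/(2√2)`,
strictly less than the ergotropy `1/2`. -/
theorem geodesic_attractor_suboptimal
    (sy H ρ σm : Matrix (Fin 2) (Fin 2) ℂ) (ψ : Fin 2 → ℂ)
    (hsy : sy = !![0, -Complex.I; Complex.I, 0])
    (hH : H = !![0, 0; 0, 1])
    (hρ : ρ = !![1/2, 1/2; 1/2, 1/2])
    (hψ : ψ = ![(Real.cos (π/8) : ℂ), (Real.sin (π/8) : ℂ)])
    (hσ : σm = vecMulVec ψ (star ψ))
    (U : ℝ → Matrix (Fin 2) (Fin 2) ℂ)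
    (hU : ∀ t : ℝ, U t = NormedSpace.exp ((Complex.I * (t : ℂ)) • sy)) :
    (∃ t ∈ Set.Icc (0:ℝ) (π/4), U t * ρ * star (U t) = σm) ∧
    (ρ * H).trace - (σm * H).trace = ((1/(2 * Real.sqrt 2) : ℝ) : ℂ) ∧
    1/(2 * Real.sqrt 2) < (1/2 : ℝ) := by
  have hρ' : ρ = vecMulVec (realKet (π / 4)) (star (realKet (π / 4))) := by
    rw [hρ, vecMulVec_realKet_pi_div_four]
  have hσ' : σm = vecMulVec (realKet (π / 8)) (star (realKet (π / 8))) := by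
    rw [hσ, hψ, realKet]
  refine ⟨⟨π / 8, ⟨by positivity, by linarith [pi_pos]⟩, ?_⟩, ?_, ?_⟩
  · rw [hU, hsy, exp_I_mul_smul_pauliY, hρ', hσ', mul_vecMulVec_star_mul_star,
      yRotation_mulVec_realKet, show π / 4 - π / 8 = π / 8 by ring]
  · rw [hρ', hσ', hH, trace_vecMulVec_realKet_mul_excited, trace_vecMulVec_realKet_mul_excited,
      ← ofReal_sub, sin_sq_pi_div_four_sub_sin_sq_pi_div_eight]
  · rw [one_div_lt_one_div (by positivity) two_pos]
    linarith [Real.one_lt_sqrt_two]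
end
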